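/- Generalized gap condition. Let N be a quantum channel with complementary channel N^c. Suppose σ is an optimal state for N (i.e. I_c(σ,N) = Q^(1)(N)), and suppose there exists a quantum state ρ and a real number r > 0 such that I_c(ρ, N^c) > 0 and σ − r·ρ is positive semidefinite. Then Q^(1)(N) < P^(1)(N). -/

import Mathlib

open Matrix BigOperators Kronecker
open scoped ComplexOrder

/-- von Neumann entropy of a matrix: `-∑ μ_k log μ_k` over the eigenvalues
(junk value `0` if the matrix is not Hermitian). Note `Real.log 0 = 0`. -/
noncomputable def vNEntropy {n : Type*} [Fintype n] [DecidableEq n]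
    (σ : Matrix n n ℂ) : ℝ :=
  if h : σ.IsHermitian then -∑ k, (h.eigenvalues k) * Real.log (h.eigenvalues k) else 0

/-- `K` is a family of Kraus operators for a quantum channel. -/
def IsKraus {dA dB ι : Type*} [Fintype dA] [DecidableEq dA] [Fintype dB] [Fintype ι]
    (K : ι → Matrix dB dA ℂ) : Prop :=
  ∑ i, (K i)ᴴ * K i = 1

/-- Action `X ↦ ∑ i, K i * X * (K i)ᴴ` of the channel with Kraus operators `K`. -/
noncomputable def chanOut {dA dB ι : Type*} [Fintype dA] [Fintype dB] [Fintype ι]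
    (K : ι → Matrix dB dA ℂ) (X : Matrix dA dA ℂ) : Matrix dB dB ℂ :=
  ∑ i, K i * X * (K i)ᴴ

/-- Action of the complementary channel: `(N^c(X))_{ij} = Tr (K i * X * (K j)ᴴ)`. -/
noncomputable def compOut {dA dB ι : Type*} [Fintype dA] [Fintype dB] [Fintype ι]
    (K : ι → Matrix dB dA ℂ) (X : Matrix dA dA ℂ) : Matrix ι ι ℂ :=
  Matrix.of fun i j => Matrix.trace (K i * X * (K j)ᴴ)

/-- A quantum state: positive semidefinite with trace one. -/
def IsQState {n : Type*} [Fintype n] (ρ : Matrix n n ℂ) : Prop :=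
  ρ.PosSemidef ∧ ρ.trace = 1

/-- Coherent information `I_c(ρ, N) = S(N(ρ)) - S(N^c(ρ))`. -/
noncomputable def cohInfo {dA dB ι : Type*} [Fintype dA] [Fintype dB] [DecidableEq dB]
    [Fintype ι] [DecidableEq ι] (K : ι → Matrix dB dA ℂ) (ρ : Matrix dA dA ℂ) : ℝ :=
  vNEntropy (chanOut K ρ) - vNEntropy (compOut K ρ)

/-- One-shot quantum capacity: `Q¹(N) = sup_ρ I_c(ρ, N)` over all states `ρ`. -/
noncomputable def Q1 {dA dB ι : Type*} [Fintype dA] [Fintype dB] [DecidableEq dB]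
    [Fintype ι] [DecidableEq ι] (K : ι → Matrix dB dA ℂ) : ℝ :=
  sSup {x : ℝ | ∃ ρ : Matrix dA dA ℂ, IsQState ρ ∧ cohInfo K ρ = x}

/-- Kraus operators of the tensor product channel `N₁ ⊗ N₂`. -/
noncomputable def tensorKraus {dA₁ dB₁ ι₁ dA₂ dB₂ ι₂ : Type*}
    (K1 : ι₁ → Matrix dB₁ dA₁ ℂ) (K2 : ι₂ → Matrix dB₂ dA₂ ℂ) :
    ι₁ × ι₂ → Matrix (dB₁ × dB₂) (dA₁ × dA₂) ℂ :=
  fun p => K1 p.1 ⊗ₖ K2 p.2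

/-- `IsEnsemble p σs` : the `p i` form a probability vector and each `σs i` is a state. -/
def IsEnsemble {dA : Type*} [Fintype dA] {n : ℕ} (p : Fin n → ℝ)
    (σs : Fin n → Matrix dA dA ℂ) : Prop :=
  (∀ i, 0 ≤ p i) ∧ ∑ i, p i = 1 ∧ ∀ i, IsQState (σs i)

/-- Private information of an ensemble:
`I_p({p_i, ρ_i}, N) = I_c(∑ p_i ρ_i, N) - ∑ p_i I_c(ρ_i, N)`. -/
noncomputable def privInfo {dA dB ι : Type*} [Fintype dA] [Fintype dB] [DecidableEq dB]
    [Fintype ι] [DecidableEq ι] (K : ι → Matrix dB dA ℂ) {n : ℕ} (p : Fin n → ℝ)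
    (σs : Fin n → Matrix dA dA ℂ) : ℝ :=
  cohInfo K (∑ i, (p i : ℂ) • σs i) - ∑ i, p i * cohInfo K (σs i)

/-- One-shot private capacity: the supremum of the private information over all ensembles. -/
noncomputable def P1 {dA dB ι : Type*} [Fintype dA] [Fintype dB] [DecidableEq dB]
    [Fintype ι] [DecidableEq ι] (K : ι → Matrix dB dA ℂ) : ℝ :=
  sSup {x : ℝ | ∃ (n : ℕ) (p : Fin n → ℝ) (σs : Fin n → Matrix dA dA ℂ),
    IsEnsemble p σs ∧ privInfo K p σs = x}

/-- Coherent information of the complementary channel: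
`I_c(ρ, N^c) = S(N^c(ρ)) - S(N(ρ))`. -/
noncomputable def cohInfoComp {dA dB ι : Type*} [Fintype dA] [Fintype dB] [DecidableEq dB]
    [Fintype ι] [DecidableEq ι] (K : ι → Matrix dB dA ℂ) (ρ : Matrix dA dA ℂ) : ℝ :=
  vNEntropy (compOut K ρ) - vNEntropy (chanOut K ρ)

/-!
Decompose `σ - r • ρ = ∑ k, w k • ψ k` spectrally into pure states `ψ k`. The ensemble
`{(r, ρ)} ∪ {(w k, ψ k)}` averages to `σ`, and pure inputs carry no coherent information, since
the outputs of `N` and `N^c` on a pure state are the two marginals of a pure state on `B ⊗ E`.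
So this ensemble has private information
`I_c(σ, N) - r I_c(ρ, N) = Q¹(N) + r I_c(ρ, N^c) > Q¹(N)`.
-/
open Polynomial

section Entropy

variable {n : Type*} [Fintype n] [DecidableEq n]

lemma vNEntropy_eq_sum_negMulLog {M : Matrix n n ℂ} (hM : M.IsHermitian) :
    vNEntropy M = ∑ k, Real.negMulLog (hM.eigenvalues k) := by
  simp [vNEntropy, hM, Real.negMulLog, Finset.sum_neg_distrib]

lemma vNEntropy_eq_sum_roots_charpoly {M : Matrix n n ℂ} (hM : M.IsHermitian) :
    vNEntropy M = (M.charpoly.roots.map fun z => Real.negMulLog z.re).sum := by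
  rw [vNEntropy_eq_sum_negMulLog hM, hM.roots_charpoly_eq_eigenvalues, Multiset.map_map]
  rfl

lemma vNEntropy_transpose {M : Matrix n n ℂ} (hM : M.IsHermitian) :
    vNEntropy Mᵀ = vNEntropy M := by
  rw [vNEntropy_eq_sum_roots_charpoly hM.transpose, vNEntropy_eq_sum_roots_charpoly hM,
    charpoly_transpose]

lemma vNEntropy_mul_conjTranspose_comm {m : Type*} [Fintype m] [DecidableEq m]
    (A : Matrix m n ℂ) : vNEntropy (A * Aᴴ) = vNEntropy (Aᴴ * A) := by
  have h := congrArg (fun p : ℂ[X] => (p.roots.map fun z => Real.negMulLog z.re).sum)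
    (charpoly_mul_comm' A Aᴴ)
  simpa [roots_mul, X_ne_zero, (charpoly_monic _).ne_zero,
    ← vNEntropy_eq_sum_roots_charpoly (isHermitian_mul_conjTranspose_self A),
    ← vNEntropy_eq_sum_roots_charpoly (isHermitian_conjTranspose_mul_self A),
    Multiset.map_nsmul, Multiset.sum_nsmul] using h

lemma Matrix.PosSemidef.vNEntropy_le_card {M : Matrix n n ℂ} (hM : M.PosSemidef) :
    vNEntropy M ≤ Fintype.card n := by
  rw [vNEntropy_eq_sum_negMulLog hM.isHermitian, ← nsmul_one, ← Finset.card_univ,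
    ← Finset.sum_const]
  refine Finset.sum_le_sum fun k _ => ?_
  linarith [Real.negMulLog_le_one_sub_self (hM.eigenvalues_nonneg k), hM.eigenvalues_nonneg k]

lemma IsQState.sum_eigenvalues {ρ : Matrix n n ℂ} (hρ : IsQState ρ) :
    ∑ k, hρ.1.isHermitian.eigenvalues k = 1 := by
  have h := hρ.1.isHermitian.trace_eq_sum_eigenvalues.symm.trans hρ.2
  exact Complex.ofReal_injective (by simpa using h)

lemma IsQState.vNEntropy_nonneg {ρ : Matrix n n ℂ} (hρ : IsQState ρ) : 0 ≤ vNEntropy ρ := by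
  rw [vNEntropy_eq_sum_negMulLog hρ.1.isHermitian]
  refine Finset.sum_nonneg fun k _ => Real.negMulLog_nonneg (hρ.1.eigenvalues_nonneg k) ?_
  rw [← hρ.sum_eigenvalues]
  exact Finset.single_le_sum (fun j _ => hρ.1.eigenvalues_nonneg j) (Finset.mem_univ k)

end Entropy

section Channel

variable {dA dB ι : Type*} [Fintype dA] [Fintype dB] [Fintype ι]

def compKraus (K : ι → Matrix dB dA ℂ) : dB → Matrix ι dA ℂ :=
  fun b => of fun i a => K i b a

lemma compOut_eq_chanOut_compKraus (K : ι → Matrix dB dA ℂ) (X : Matrix dA dA ℂ) :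
    compOut K X = chanOut (compKraus K) X := by
  ext i j
  simp [compOut, chanOut, compKraus, trace, mul_apply, Matrix.sum_apply]

lemma IsKraus.compKraus [DecidableEq dA] {K : ι → Matrix dB dA ℂ} (hK : IsKraus K) :
    IsKraus (compKraus K) := by
  unfold IsKraus at hK ⊢
  rw [← hK]
  ext a c
  simp only [Matrix.sum_apply, mul_apply, conjTranspose_apply]
  exact Finset.sum_comm

lemma chanOut_posSemidef (K : ι → Matrix dB dA ℂ) {X : Matrix dA dA ℂ} (hX : X.PosSemidef) :
    (chanOut K X).PosSemidef :=
  posSemidef_sum _ fun i _ => hX.mul_mul_conjTranspose_same (K i)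

lemma IsKraus.trace_chanOut [DecidableEq dA] {K : ι → Matrix dB dA ℂ} (hK : IsKraus K)
    (X : Matrix dA dA ℂ) : (chanOut K X).trace = X.trace := by
  rw [chanOut, trace_sum, Finset.sum_congr rfl fun i _ => trace_mul_cycle (K i) X (K i)ᴴ,
    ← trace_sum, ← Finset.sum_mul, hK, one_mul]

lemma IsKraus.isQState_chanOut [DecidableEq dA] {K : ι → Matrix dB dA ℂ} (hK : IsKraus K)
    {ρ : Matrix dA dA ℂ} (hρ : IsQState ρ) : IsQState (chanOut K ρ) :=
  ⟨chanOut_posSemidef K hρ.1, (hK.trace_chanOut ρ).trans hρ.2⟩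

lemma IsKraus.isQState_compOut [DecidableEq dA] {K : ι → Matrix dB dA ℂ} (hK : IsKraus K)
    {ρ : Matrix dA dA ℂ} (hρ : IsQState ρ) : IsQState (compOut K ρ) := by
  rw [compOut_eq_chanOut_compKraus]
  exact hK.compKraus.isQState_chanOut hρ

variable [DecidableEq dA] [DecidableEq dB] [DecidableEq ι] {K : ι → Matrix dB dA ℂ}

lemma IsKraus.cohInfo_le_card (hK : IsKraus K) {ρ : Matrix dA dA ℂ} (hρ : IsQState ρ) :
    cohInfo K ρ ≤ Fintype.card dB := by
  rw [cohInfo]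
  have := (hK.isQState_compOut hρ).vNEntropy_nonneg
  linarith [(hK.isQState_chanOut hρ).1.vNEntropy_le_card]

lemma IsKraus.neg_card_le_cohInfo (hK : IsKraus K) {ρ : Matrix dA dA ℂ} (hρ : IsQState ρ) :
    -(Fintype.card ι : ℝ) ≤ cohInfo K ρ := by
  rw [cohInfo]
  have := (hK.isQState_chanOut hρ).vNEntropy_nonneg
  linarith [(hK.isQState_compOut hρ).1.vNEntropy_le_card]

end Channel

section PureState

variable {dA dB ι : Type*} [Fintype dA] [Fintype dB] [Fintype ι]

lemma mul_vecMulVec_star_mul_conjTranspose {α m n : Type*} [NonUnitalSemiring α] [StarRing α]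
    [Fintype n] (A B : Matrix m n α) (v : n → α) : A * vecMulVec v (star v) * Bᴴ = vecMulVec (A *ᵥ v) (star (B *ᵥ v)) := by
  rw [mul_vecMulVec, vecMulVec_mul, star_mulVec]

/-- The Stinespring image `∑ i, K i v ⊗ e i` of `v`, reshaped into a `dB × ι` matrix. -/
def stinespringMatrix (K : ι → Matrix dB dA ℂ) (v : dA → ℂ) : Matrix dB ι ℂ :=
  of fun b i => (K i *ᵥ v) b

lemma chanOut_vecMulVec (K : ι → Matrix dB dA ℂ) (v : dA → ℂ) :
    chanOut K (vecMulVec v (star v)) = stinespringMatrix K v * (stinespringMatrix K v)ᴴ := by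
  ext b c
  simp [chanOut, mul_vecMulVec_star_mul_conjTranspose, stinespringMatrix, Matrix.sum_apply,
    mul_apply, vecMulVec_apply]

lemma compOut_vecMulVec (K : ι → Matrix dB dA ℂ) (v : dA → ℂ) :
    compOut K (vecMulVec v (star v)) = ((stinespringMatrix K v)ᴴ * stinespringMatrix K v)ᵀ := by
  ext i j
  simp [compOut, mul_vecMulVec_star_mul_conjTranspose, stinespringMatrix, dotProduct,
    mul_apply, mul_comm]

/-- The two marginals of the pure output `stinespringMatrix K v` have the same nonzero spectrum. -/
lemma cohInfo_vecMulVec [DecidableEq dB] [DecidableEq ι] (K : ι → Matrix dB dA ℂ)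
    (v : dA → ℂ) : cohInfo K (vecMulVec v (star v)) = 0 := by
  rw [cohInfo, chanOut_vecMulVec, compOut_vecMulVec,
    vNEntropy_transpose (isHermitian_conjTranspose_mul_self _),
    vNEntropy_mul_conjTranspose_comm, sub_self]

end PureState

section Decomposition

variable {n : Type*} [Fintype n]

lemma isQState_vecMulVec_of_norm_eq_one {v : EuclideanSpace ℂ n} (hv : ‖v‖ = 1) :
    IsQState (vecMulVec ⇑v (star ⇑v)) := by
  refine ⟨posSemidef_vecMulVec_self_star _, ?_⟩
  rw [trace_vecMulVec, ← EuclideanSpace.inner_eq_star_dotProduct, inner_self_eq_norm_sq_to_K, hv]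
  simp

variable [DecidableEq n]

lemma Matrix.IsHermitian.eq_sum_eigenvalues_smul_vecMulVec {𝕜 : Type*} [RCLike 𝕜]
    {M : Matrix n n 𝕜} (hM : M.IsHermitian) :
    M = ∑ k, (hM.eigenvalues k : 𝕜) •
      vecMulVec ⇑(hM.eigenvectorBasis k) (star ⇑(hM.eigenvectorBasis k)) := by
  conv_lhs => rw [hM.spectral_theorem, Unitary.conjStarAlgAut_apply]
  ext a c
  simp only [mul_apply, diagonal_apply, Matrix.sum_apply, Matrix.smul_apply, vecMulVec_apply]
  refine Finset.sum_congr rfl fun k _ => ?_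
  simp only [eigenvectorUnitary_apply, Function.comp_apply, mul_ite, mul_zero,
    Finset.sum_ite_eq', Finset.mem_univ, ↓reduceIte, star_apply, RCLike.star_def, Pi.star_apply,
    smul_eq_mul]
  ring

lemma Matrix.PosSemidef.exists_eq_sum_smul_pure_states {M : Matrix n n ℂ} (hM : M.PosSemidef) :
    ∃ (m : ℕ) (w : Fin m → ℝ) (v : Fin m → n → ℂ), (∀ k, 0 ≤ w k) ∧
      (∀ k, IsQState (vecMulVec (v k) (star (v k)))) ∧
      M = ∑ k, (w k : ℂ) • vecMulVec (v k) (star (v k)) := by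
  let e := (Fintype.equivFin n).symm
  refine ⟨Fintype.card n, fun k => hM.isHermitian.eigenvalues (e k),
    fun k => ⇑(hM.isHermitian.eigenvectorBasis (e k)), fun k => hM.eigenvalues_nonneg _,
    fun k => isQState_vecMulVec_of_norm_eq_one (hM.isHermitian.eigenvectorBasis.orthonormal.1 _),
    ?_⟩
  rw [e.sum_comp (fun k => (hM.isHermitian.eigenvalues k : ℂ) •
    vecMulVec ⇑(hM.isHermitian.eigenvectorBasis k) (star ⇑(hM.isHermitian.eigenvectorBasis k)))]
  exact hM.isHermitian.eq_sum_eigenvalues_smul_vecMulVec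

end Decomposition

section Ensemble

variable {dA dB ι : Type*} [Fintype dA]

lemma IsEnsemble.isQState_sum {n : ℕ} {p : Fin n → ℝ} {σs : Fin n → Matrix dA dA ℂ}
    (he : IsEnsemble p σs) : IsQState (∑ i, (p i : ℂ) • σs i) := by
  obtain ⟨hp, hp_sum, hσs⟩ := he
  refine ⟨posSemidef_sum _ fun i _ => (hσs i).1.smul (Complex.zero_le_real.mpr (hp i)), ?_⟩
  simp [trace_sum, (hσs _).2, ← Complex.ofReal_sum, hp_sum]

variable [DecidableEq dA] [Fintype dB] [DecidableEq dB] [Fintype ι] [DecidableEq ι]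
  {K : ι → Matrix dB dA ℂ}

lemma IsKraus.bddAbove_privInfo (hK : IsKraus K) :
    BddAbove {x : ℝ | ∃ (n : ℕ) (p : Fin n → ℝ) (σs : Fin n → Matrix dA dA ℂ),
      IsEnsemble p σs ∧ privInfo K p σs = x} := by
  refine ⟨Fintype.card dB + Fintype.card ι, ?_⟩
  rintro _ ⟨n, p, σs, he, rfl⟩
  have hmix : -(Fintype.card ι : ℝ) ≤ ∑ i, p i * cohInfo K (σs i) :=
    calc -(Fintype.card ι : ℝ) = ∑ i, p i * -(Fintype.card ι : ℝ) := by
          rw [← Finset.sum_mul, he.2.1, one_mul]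
      _ ≤ ∑ i, p i * cohInfo K (σs i) := Finset.sum_le_sum fun i _ =>
          mul_le_mul_of_nonneg_left (hK.neg_card_le_cohInfo (he.2.2 i)) (he.1 i)
  rw [privInfo]
  linarith [hK.cohInfo_le_card he.isQState_sum]

lemma IsKraus.privInfo_le_P1 (hK : IsKraus K) {n : ℕ} {p : Fin n → ℝ}
    {σs : Fin n → Matrix dA dA ℂ} (he : IsEnsemble p σs) : privInfo K p σs ≤ P1 K :=
  le_csSup hK.bddAbove_privInfo ⟨n, p, σs, he, rfl⟩

lemma exists_isEnsemble_privInfo_eq (K : ι → Matrix dB dA ℂ) {σ ρ : Matrix dA dA ℂ}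
    (hσ : σ.trace = 1) (hρ : IsQState ρ) {r : ℝ} (hr : 0 ≤ r) (hpsd : (σ - r • ρ).PosSemidef) :
    ∃ (n : ℕ) (p : Fin n → ℝ) (σs : Fin n → Matrix dA dA ℂ),
      IsEnsemble p σs ∧ privInfo K p σs = cohInfo K σ - r * cohInfo K ρ := by
  obtain ⟨m, w, v, hw, hv, hdecomp⟩ := hpsd.exists_eq_sum_smul_pure_states
  have hw_sum : r + ∑ k, w k = 1 := by
    have h := congrArg trace hdecomp
    simp only [trace_sub, trace_smul, trace_sum, (hv _).2, hσ, hρ.2] at h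
    have h' : ((1 - r : ℝ) : ℂ) = ((∑ k, w k : ℝ) : ℂ) := by push_cast; simpa using h
    linarith [Complex.ofReal_injective h']
  let p : Fin (m + 1) → ℝ := Fin.cons r w
  let σs : Fin (m + 1) → Matrix dA dA ℂ := Fin.cons ρ fun k => vecMulVec (v k) (star (v k))
  have hmix : ∑ i, (p i : ℂ) • σs i = σ := by
    simp only [p, σs, Fin.sum_univ_succ, Fin.cons_zero, Fin.cons_succ]
    rw [← hdecomp, Complex.coe_smul, add_sub_cancel]
  refine ⟨m + 1, p, σs, ⟨Fin.cases hr hw, by simpa [p, Fin.sum_cons] using hw_sum,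
    Fin.cases hρ hv⟩, ?_⟩
  rw [privInfo, hmix]
  simp [p, σs, Fin.sum_univ_succ, cohInfo_vecMulVec]

end Ensemble

/-- **Generalized gap condition.** If `σ` is an optimal state for `N` and there is a state
`ρ` and `r > 0` with `I_c(ρ, N^c) > 0` and `σ - r·ρ` positive semidefinite, then
`Q¹(N) < P¹(N)`. -/
theorem quantum_lt_private_of_comp_positive {dA dB ι : Type*}
    [Fintype dA] [DecidableEq dA] [Fintype dB] [DecidableEq dB]
    [Fintype ι] [DecidableEq ι]
    (K : ι → Matrix dB dA ℂ) (hK : IsKraus K)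
    (σ : Matrix dA dA ℂ) (hσ : IsQState σ) (hopt : cohInfo K σ = Q1 K)
    (ρ : Matrix dA dA ℂ) (hρ : IsQState ρ)
    (r : ℝ) (hr : 0 < r)
    (hcomp : cohInfoComp K ρ > 0)
    (hpsd : (σ - r • ρ).PosSemidef) :
    Q1 K < P1 K := by
  obtain ⟨n, p, σs, he, hpriv⟩ := exists_isEnsemble_privInfo_eq K hσ.2 hρ hr.le hpsd
  have hcomp_eq : cohInfoComp K ρ = -cohInfo K ρ := by rw [cohInfo, cohInfoComp]; ring
  calc Q1 K = cohInfo K σ := hopt.symm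
    _ < cohInfo K σ - r * cohInfo K ρ := by
      have := mul_pos hr hcomp
      rw [hcomp_eq, mul_neg] at this
      linarith
    _ = privInfo K p σs := hpriv.symm
    _ ≤ P1 K := hK.privInfo_le_P1 he
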